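/- Let r > 0 and let {v₀,v₁,w} and {v₀',v₁',w'} be positive oriented orthonormal systems. Write α(t,v₀,v₁,w) = √(1+r²) w + r cos(2πt) v₁ + r sin(2πt) v₀. Then there exists θ ∈ ℝ such that α(t,v₀,v₁,w) = α(t+θ,v₀',v₁',w') for all t ∈ ℝ if and only if w = w'. -/

import Mathlib

noncomputable section

open Real

/-- The Minkowski inner product on ℝ³. -/
def mink (v w : Fin 3 → ℝ) : ℝ := v 0 * w 0 + v 1 * w 1 - v 2 * w 2

/-- The twisted cross product on ℝ³. -/
def mcross (v w : Fin 3 → ℝ) : Fin 3 → ℝ :=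
  ![v 2 * w 1 - v 1 * w 2, v 0 * w 2 - v 2 * w 0, v 0 * w 1 - v 1 * w 0]

/-- A positive oriented orthonormal system with respect to the Minkowski metric. -/
def posOrth (v₀ v₁ w : Fin 3 → ℝ) : Prop :=
  mink v₀ v₁ = 0 ∧ mink v₀ w = 0 ∧ mink v₁ w = 0 ∧
  mink v₀ v₀ = 1 ∧ mink v₁ v₁ = 1 ∧ mink w w = -1 ∧
  mcross v₀ v₁ = w

/-- Membership in the hyperbolic plane ℍ ⊂ ℝ³. -/
def inH (x : Fin 3 → ℝ) : Prop := x 2 ^ 2 - x 0 ^ 2 - x 1 ^ 2 = 1 ∧ 0 < x 2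

/-!
Antipodal points of the curve average to its centre, `α t + α (t + 1/2) = 2 √(1 + r²) w`, so
equal curves have equal centres. Conversely, if `w = w'` then `{v₀, v₁}` and `{v₀', v₁'}` are both
orthonormal bases of the spacelike plane `w^⊥`: for the frame matrix `M` with rows `v₀, v₁, w`,
orthonormality reads `M η Mᵀ = η`, which forces `Mᵀ η M = η`, i.e. every `x ⊥ w` equals
`⟨x, v₀⟩ v₀ + ⟨x, v₁⟩ v₁`. Since `v₀ ×ₘ v₁ = w = v₀' ×ₘ v₁'`, the change of basis has determinant
one, so it is a rotation by some angle `ψ`, which the phase shift `θ = ψ / 2π` absorbs.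
-/

open Matrix

def minkowskiMetric : Matrix (Fin 3) (Fin 3) ℝ := diagonal ![1, 1, -1]

local notation "η" => minkowskiMetric

lemma mink_comm (v w : Fin 3 → ℝ) : mink v w = mink w v := by
  simp only [mink]; ring

lemma mink_eq_dotProduct_mulVec (v w : Fin 3 → ℝ) : mink v w = v ⬝ᵥ (η *ᵥ w) := by
  simp only [mink, dotProduct, minkowskiMetric, mulVec_diagonal, Fin.sum_univ_three, cons_val_zero,
    cons_val_one, cons_val]
  ring

lemma minkowskiMetric_mul_self : η * η = 1 := by
  rw [minkowskiMetric, diagonal_mul_diagonal, ← diagonal_one]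
  congr 1; ext i; fin_cases i <;> norm_num

lemma eq_sum_mink_smul_of_mul_transpose {e : Fin 3 → Fin 3 → ℝ}
    (he : of e * η * (of e)ᵀ = η) (x : Fin 3 → ℝ) :
    x = mink (e 0) x • e 0 + mink (e 1) x • e 1 - mink (e 2) x • e 2 := by
  set M := of e
  have h : Mᵀ * (η * M * η) = 1 := mul_eq_one_comm.mp <| by
    simp only [Matrix.mul_assoc] at he ⊢
    rw [he, minkowskiMetric_mul_self]
  calc x = (Mᵀ * (η * M * η)) *ᵥ x := by rw [h, one_mulVec]
    _ = _ := by
      simp only [← mulVec_mulVec, mulVec_transpose, vecMul_eq_sum, Fin.sum_univ_three,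
        mink_eq_dotProduct_mulVec, minkowskiMetric, mulVec_diagonal, cons_val_zero, cons_val_one,
        cons_val, one_mul, neg_one_mul, neg_smul, sub_eq_add_neg]
      rfl

lemma of_mul_minkowskiMetric_mul_transpose_apply (e : Fin 3 → Fin 3 → ℝ) (i j : Fin 3) :
    (of e * η * (of e)ᵀ) i j = mink (e i) (e j) := by
  rw [mink_eq_dotProduct_mulVec, Matrix.mul_assoc, mul_apply']
  rfl

lemma mink_add_smul_add_smul (a b : Fin 3 → ℝ) (p q c d : ℝ) :
    mink (p • a + q • b) (c • a + d • b) =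
      p * c * mink a a + (p * d + q * c) * mink a b + q * d * mink b b := by
  simp only [mink, Pi.add_apply, Pi.smul_apply, smul_eq_mul]; ring

lemma mcross_add_smul_add_smul (a b : Fin 3 → ℝ) (p q c d : ℝ) :
    mcross (p • a + q • b) (c • a + d • b) = (p * d - q * c) • mcross a b := by
  ext i; fin_cases i <;>
    simp only [mcross, Pi.add_apply, Pi.smul_apply, smul_eq_mul, Fin.zero_eta, Fin.mk_one,
      Fin.reduceFinMk, cons_val_zero, cons_val_one, cons_val] <;> ring

lemma exists_cos_eq_sin_eq_of_sq_add_sq_eq_one {a b : ℝ} (h : a ^ 2 + b ^ 2 = 1) :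
    ∃ ψ : ℝ, cos ψ = a ∧ sin ψ = b := by
  have hz : ‖(⟨a, b⟩ : ℂ)‖ = 1 := by simp [Complex.norm_eq_sqrt_sq_add_sq, h]
  refine ⟨Complex.arg ⟨a, b⟩, ?_, ?_⟩
  · simpa [hz] using Complex.norm_mul_cos_arg ⟨a, b⟩
  · simpa [hz] using Complex.norm_mul_sin_arg ⟨a, b⟩

namespace posOrth

variable {v₀ v₁ w : Fin 3 → ℝ}

lemma frame_mul_minkowskiMetric_mul_transpose (h : posOrth v₀ v₁ w) :
    of ![v₀, v₁, w] * η * (of ![v₀, v₁, w])ᵀ = η := by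
  obtain ⟨h01, h0w, h1w, h00, h11, hww, -⟩ := h
  ext i j
  rw [of_mul_minkowskiMetric_mul_transpose_apply]
  fin_cases i <;> fin_cases j <;>
    simp [minkowskiMetric, h01, h0w, h1w, h00, h11, hww, mink_comm v₁ v₀, mink_comm w v₀,
      mink_comm w v₁]

lemma eq_add_of_mink_eq_zero (h : posOrth v₀ v₁ w) {x : Fin 3 → ℝ} (hx : mink x w = 0) :
    x = mink v₀ x • v₀ + mink v₁ x • v₁ := by
  have := eq_sum_mink_smul_of_mul_transpose h.frame_mul_minkowskiMetric_mul_transpose x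
  simpa [mink_comm w x, hx] using this

lemma exists_rotation (h : posOrth v₀ v₁ w) {v₀' v₁' : Fin 3 → ℝ} (h' : posOrth v₀' v₁' w) :
    ∃ ψ : ℝ, v₀' = cos ψ • v₀ + sin ψ • v₁ ∧ v₁' = (-sin ψ) • v₀ + cos ψ • v₁ := by
  obtain ⟨p, q, rfl⟩ : ∃ p q : ℝ, v₀' = p • v₀ + q • v₁ :=
    ⟨_, _, h.eq_add_of_mink_eq_zero h'.2.1⟩
  obtain ⟨c, d, rfl⟩ : ∃ c d : ℝ, v₁' = c • v₀ + d • v₁ :=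
    ⟨_, _, h.eq_add_of_mink_eq_zero h'.2.2.1⟩
  obtain ⟨h01, -, -, h00, h11, hww, hcross⟩ := h
  obtain ⟨h01', -, -, h00', -, -, hcross'⟩ := h'
  simp only [mink_add_smul_add_smul, h00, h01, h11] at h01' h00'
  rw [mcross_add_smul_add_smul, hcross] at hcross'
  have hw : w ≠ 0 := by rintro rfl; simp [mink] at hww
  have hdet : p * d - q * c = 1 :=
    smul_left_injective ℝ hw (hcross'.trans (one_smul ℝ w).symm)
  obtain ⟨ψ, hcos, hsin⟩ :=
    exists_cos_eq_sin_eq_of_sq_add_sq_eq_one (by linarith : p ^ 2 + q ^ 2 = 1)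
  refine ⟨ψ, by rw [hcos, hsin], ?_⟩
  rw [hcos, hsin, show c = -q by linear_combination p * h01' - q * hdet - c * h00',
    show d = p by linear_combination q * h01' + p * hdet - d * h00']

end posOrth

def circleCurve (r : ℝ) (v₀ v₁ w : Fin 3 → ℝ) (t : ℝ) : Fin 3 → ℝ :=
  √(1 + r ^ 2) • w + (r * cos (2 * π * t)) • v₁ + (r * sin (2 * π * t)) • v₀

lemma circleCurve_add_circleCurve_add_half (r : ℝ) (v₀ v₁ w : Fin 3 → ℝ) (t : ℝ) :
    circleCurve r v₀ v₁ w t + circleCurve r v₀ v₁ w (t + 1 / 2) = (2 * √(1 + r ^ 2)) • w := by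
  have hhalf : 2 * π * (t + 1 / 2) = 2 * π * t + π := by ring
  simp only [circleCurve, hhalf, cos_add_pi, sin_add_pi]
  module

lemma circleCurve_rotate (r ψ : ℝ) (v₀ v₁ w : Fin 3 → ℝ) (t : ℝ) :
    circleCurve r (cos ψ • v₀ + sin ψ • v₁) ((-sin ψ) • v₀ + cos ψ • v₁) w (t + ψ / (2 * π)) =
      circleCurve r v₀ v₁ w t := by
  have hshift : 2 * π * (t + ψ / (2 * π)) = 2 * π * t + ψ := by field_simp
  simp only [circleCurve, hshift, cos_add, sin_add]
  linear_combination (norm := module)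
    (sin_sq_add_cos_sq ψ) • ((r * cos (2 * π * t)) • v₁ + (r * sin (2 * π * t)) • v₀)

theorem stmt_11_general (r : ℝ) (v₀ v₁ w v₀' v₁' w' : Fin 3 → ℝ)
    (hsys : posOrth v₀ v₁ w) (hsys' : posOrth v₀' v₁' w') :
    (∃ θ : ℝ, ∀ t : ℝ,
      Real.sqrt (1 + r ^ 2) • w + (r * Real.cos (2 * Real.pi * t)) • v₁ +
          (r * Real.sin (2 * Real.pi * t)) • v₀ =
        Real.sqrt (1 + r ^ 2) • w' + (r * Real.cos (2 * Real.pi * (t + θ))) • v₁' +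
          (r * Real.sin (2 * Real.pi * (t + θ))) • v₀') ↔ w = w' := by
  change (∃ θ : ℝ, ∀ t, circleCurve r v₀ v₁ w t = circleCurve r v₀' v₁' w' (t + θ)) ↔ w = w'
  constructor
  · rintro ⟨θ, hθ⟩
    have hsum := circleCurve_add_circleCurve_add_half r v₀ v₁ w 0
    rw [hθ, hθ, add_right_comm, zero_add, circleCurve_add_circleCurve_add_half] at hsum
    exact smul_right_injective _ (by positivity) hsum.symm
  · rintro rfl
    obtain ⟨ψ, rfl, rfl⟩ := hsys.exists_rotation hsys'
    exact ⟨ψ / (2 * π), fun t => (circleCurve_rotate r ψ v₀ v₁ w t).symm⟩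

/-- two circle solutions agree up to a phase shift if and only if they
have the same center w. -/
theorem stmt_11 (r : ℝ) (hr : 0 < r) (v₀ v₁ w v₀' v₁' w' : Fin 3 → ℝ)
    (hsys : posOrth v₀ v₁ w) (hsys' : posOrth v₀' v₁' w') :
    (∃ θ : ℝ, ∀ t : ℝ,
      Real.sqrt (1 + r ^ 2) • w + (r * Real.cos (2 * Real.pi * t)) • v₁ +
          (r * Real.sin (2 * Real.pi * t)) • v₀ =
        Real.sqrt (1 + r ^ 2) • w' + (r * Real.cos (2 * Real.pi * (t + θ))) • v₁' +
          (r * Real.sin (2 * Real.pi * (t + θ))) • v₀') ↔ w = w' :=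
  stmt_11_general r v₀ v₁ w v₀' v₁' w' hsys hsys'
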